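/- Let Γ = X_a(m,n,S,ℓ) satisfy Assumption A. Then precisely one of the following holds: (a) 2k_i = ±2 in ℤ_n for all i ∈ ℤ_m; or (b) m is even, 2k_1 ≠ ±2, and 2k_i = ±2 for each even i ∈ ℤ_m, while 2k_i = ±2k_1 for each odd i ∈ ℤ_m. -/

import Mathlib

namespace CubicFIG

open SimpleGraph

variable {V : Type*}

/-- `f` is an automorphism of the graph `Γ`. -/
def IsAut (Γ : SimpleGraph V) (f : Equiv.Perm V) : Prop :=
  ∀ u v : V, Γ.Adj (f u) (f v) ↔ Γ.Adj u v

/-- `f` preserves (the edge set of) the subgraph `H` (e.g. a 2-factor). -/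
def Preserves (H : SimpleGraph V) (f : Equiv.Perm V) : Prop :=
  ∀ u v : V, H.Adj u v → H.Adj (f u) (f v)

/-- `Γ` is vertex-transitive. -/
def IsVertexTransitive (Γ : SimpleGraph V) : Prop :=
  ∀ u v : V, ∃ f : Equiv.Perm V, IsAut Γ f ∧ f u = v

/-- `Γ` is cubic. -/
def IsCubic (Γ : SimpleGraph V) : Prop := ∀ v : V, (Γ.neighborSet v).ncard = 3

/-- The edge set of `Γ` is partitioned into the 2-factor `H` (a spanning 2-regular subgraph,
whose cycles are the connected components of `H`) and a 1-factor (the remaining edges,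
which form a perfect matching). -/
def FactorPartition (Γ H : SimpleGraph V) : Prop :=
  H ≤ Γ ∧ (∀ v : V, (H.neighborSet v).ncard = 2) ∧
    (∀ v : V, {w : V | Γ.Adj v w ∧ ¬ H.Adj v w}.ncard = 1)

/-- The quotient graph `Γ_C` of `Γ` with respect to the 2-factor `H`: its vertices are the
cycles of the 2-factor, i.e. the connected components of `H`, two of them being adjacent iff
some vertex of one is `Γ`-adjacent to some vertex of the other. -/
def quotientGraph (Γ H : SimpleGraph V) : SimpleGraph H.ConnectedComponent :=
  SimpleGraph.fromRel fun c d =>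
    ∃ u v : V, Γ.Adj u v ∧ H.connectedComponentMk u = c ∧ H.connectedComponentMk v = d

/-- A graph is a cycle iff it is finite, connected and 2-regular. -/
def IsCycleGraph {W : Type*} (G : SimpleGraph W) : Prop :=
  Finite W ∧ G.Connected ∧ ∀ w : W, (G.neighborSet w).ncard = 2

/-- `Γ` is of alternating cycle quotient type with respect to the 2-factor `H`:
the edge set of `Γ` is partitioned into the 2-factor `H` and a 1-factor, the quotient
graph is a cycle, and any two vertices adjacent along a common cycle of the 2-factor
have their outside neighbors in distinct cycles of the 2-factor. -/
def AltCQT (Γ H : SimpleGraph V) : Prop :=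
  IsCubic Γ ∧ FactorPartition Γ H ∧ IsCycleGraph (quotientGraph Γ H) ∧
  ∀ ⦃u v u' v' : V⦄, H.Adj u v → Γ.Adj u u' → ¬ H.Adj u u' → Γ.Adj v v' → ¬ H.Adj v v' →
    H.connectedComponentMk u' ≠ H.connectedComponentMk v'

/-- The relation giving the cycle ("non-link") edges of `X_a(m,n,S,ℓ)`:
`v_{i,j} ∼ v_{i,j+a_i}, v_{i,j+b_i}` for `j ≡ i (mod 2)`. -/
def XaCycleRel (m n : ℕ) (a b : ZMod m → ZMod n) (u v : ZMod m × ZMod n) : Prop :=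
  u.2.val % 2 = u.1.val % 2 ∧ u.1 = v.1 ∧ (v.2 = u.2 + a u.1 ∨ v.2 = u.2 + b u.1)

/-- The relation giving the "link" edges of `X_a(m,n,S,ℓ)`:
`v_{i,j} ∼ v_{i+1,j}` for `0 ≤ i ≤ m-2`, `j ≡ i (mod 2)`, and
`v_{m-1,j} ∼ v_{0,j+ℓ}` for `j ≡ m-1 (mod 2)`. -/
def XaLinkRel (m n : ℕ) (ℓ : ZMod n) (u v : ZMod m × ZMod n) : Prop :=
  (u.2.val % 2 = u.1.val % 2 ∧ u.1.val ≤ m - 2 ∧ v.1 = u.1 + 1 ∧ v.2 = u.2) ∨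
  (u.2.val % 2 = (m - 1) % 2 ∧ u.1 = ((m - 1 : ℕ) : ZMod m) ∧ v.1 = 0 ∧ v.2 = u.2 + ℓ)

/-- The graph `X_a(m,n,S,ℓ)` with signature `S = [{a 0, b 0},…,{a (m-1), b (m-1)}]`. -/
def XaGraph (m n : ℕ) (a b : ZMod m → ZMod n) (ℓ : ZMod n) : SimpleGraph (ZMod m × ZMod n) :=
  SimpleGraph.fromRel fun u v => XaCycleRel m n a b u v ∨ XaLinkRel m n ℓ u v

/-- The 2-factor of `X_a(m,n,S,ℓ)` consisting of the `m` cycles `C_i` induced on the sets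
`V_i` (its edges are the non-links). -/
def XaFactor (m n : ℕ) (a b : ZMod m → ZMod n) : SimpleGraph (ZMod m × ZMod n) :=
  SimpleGraph.fromRel (XaCycleRel m n a b)

/-- Admissibility of the parameters of `X_a(m,n,S,ℓ)`: `m ≥ 3`, `n ≥ 4` even, `ℓ` of the
same parity as `m`, `a 0 = 1`, `b 0 = -1`, and all the `a i, b i` distinct and odd with
`gcd(b i - a i, n) = 2`. -/
def Admissible (m n : ℕ) (a b : ZMod m → ZMod n) (ℓ : ZMod n) : Prop :=
  3 ≤ m ∧ 4 ≤ n ∧ n % 2 = 0 ∧ ℓ.val % 2 = m % 2 ∧ a 0 = 1 ∧ b 0 = -1 ∧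
    ∀ i : ZMod m, a i ≠ b i ∧ (a i).val % 2 = 1 ∧ (b i).val % 2 = 1 ∧
      Nat.gcd (b i - a i).val n = 2

/-- The honeycomb toroidal graph `HTG(m,n,ℓ)`: the graph `X_a(m,n,S,ℓ)` whose signature
consists of `m` copies of `{-1,1}`. -/
def HTG (m n : ℕ) (ℓ : ZMod n) : SimpleGraph (ZMod m × ZMod n) :=
  XaGraph m n (fun _ => 1) (fun _ => -1) ℓ

/-- The signature `[1,k,1,k,…,1,k]`. -/
def kSig (m n : ℕ) (k : ZMod n) : ZMod m → ZMod n :=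
  fun i => if i.val % 2 = 0 then 1 else k

/-- The graph `X_a(m,n,k,ℓ)`, i.e. `X_a(m,n,S,ℓ)` with signature `S = [1,k,1,k,…,1,k]`. -/
def XaK (m n : ℕ) (k ℓ : ZMod n) : SimpleGraph (ZMod m × ZMod n) :=
  XaGraph m n (kSig m n k) (fun i => -(kSig m n k i)) ℓ

/-- The 2-factor of `X_a(m,n,k,ℓ)` consisting of the `m` cycles `C_i`. -/
def XaKFactor (m n : ℕ) (k : ZMod n) : SimpleGraph (ZMod m × ZMod n) :=
  XaFactor m n (kSig m n k) (fun i => -(kSig m n k i))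

/-- Assumption A: `Γ = X_a(m,n,S,ℓ)` with `m ≥ 3`, `n ≥ 6` even, `ℓ` of the same parity as
`m`, signature `S = [k 0, …, k (m-1)]` (that is, `{a i, b i} = {k i, -(k i)}`) with `k 0 = 1`
and each `k i` coprime to `n`, admitting a vertex-transitive subgroup of `Aut(Γ)` preserving
the 2-factor consisting of the cycles `C_i`. -/
def AssumptionA (m n : ℕ) (k : ZMod m → ZMod n) (ℓ : ZMod n) : Prop :=
  3 ≤ m ∧ 6 ≤ n ∧ n % 2 = 0 ∧ ℓ.val % 2 = m % 2 ∧ k 0 = 1 ∧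
  (∀ i : ZMod m, Nat.Coprime (k i).val n) ∧
  ∃ G : Subgroup (Equiv.Perm (ZMod m × ZMod n)),
    (∀ g ∈ G, IsAut (XaGraph m n k (fun i => -(k i)) ℓ) g) ∧
    (∀ g ∈ G, Preserves (XaFactor m n k (fun i => -(k i))) g) ∧
    ∀ u v : ZMod m × ZMod n, ∃ g ∈ G, g u = v

/-- Condition (II): `m ≥ 4` and `n ≥ 6` even, `ℓ ∈ ℤ_n` even, `k ∈ ℤ_n` odd with
`gcd(k,n) = 1`, `2k ≠ ±2`, `2k² = ±2`, and (writing `n = 2n'`) either `ℓk = ±ℓ` and at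
least one of `k² = ±1` and `4 ∣ m` holds, or `ℓk = n' ± ℓ`, `m ≡ 2 (mod 4)` and
`k² = n' ± 1`. -/
def CondII (m n : ℕ) (k ℓ : ZMod n) : Prop :=
  4 ≤ m ∧ m % 2 = 0 ∧ 6 ≤ n ∧ n % 2 = 0 ∧ ℓ.val % 2 = 0 ∧ k.val % 2 = 1 ∧
  Nat.Coprime k.val n ∧ 2 * k ≠ 2 ∧ 2 * k ≠ -2 ∧ (2 * k ^ 2 = 2 ∨ 2 * k ^ 2 = -2) ∧
  (((ℓ * k = ℓ ∨ ℓ * k = -ℓ) ∧ ((k ^ 2 = 1 ∨ k ^ 2 = -1) ∨ m % 4 = 0)) ∨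
   ((ℓ * k = (↑(n / 2) : ZMod n) + ℓ ∨ ℓ * k = (↑(n / 2) : ZMod n) - ℓ) ∧ m % 4 = 2 ∧
     (k ^ 2 = (↑(n / 2) : ZMod n) + 1 ∨ k ^ 2 = (↑(n / 2) : ZMod n) - 1)))

/-- `Γ` (with distinguished 2-factor `H`, whose edges are the non-links) has a 10-cycle
whose code (the cyclic 0/1 sequence recording links (0) and non-links (1), up to rotation
and reflection) is given by `c`. -/
def HasTenCycleWithCode (Γ H : SimpleGraph V) (c : ZMod 10 → Prop) : Prop :=
  ∃ v : ZMod 10 → V, Function.Injective v ∧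
    ∀ j : ZMod 10, Γ.Adj (v j) (v (j + 1)) ∧ (H.Adj (v j) (v (j + 1)) ↔ c j)

/-- The code `1⁶01²0` of 10-cycles of type 2. -/
def type2Code : ZMod 10 → Prop := fun j => j.val ≠ 6 ∧ j.val ≠ 9

/-- The code `1³0101010` of 10-cycles of type 3. -/
def type3Code : ZMod 10 → Prop :=
  fun j => j.val = 0 ∨ j.val = 1 ∨ j.val = 2 ∨ j.val = 4 ∨ j.val = 6 ∨ j.val = 8

/-- `Γ` is 2-arc-regular: the automorphism group acts regularly on 2-arcs. -/
def TwoArcRegular (Γ : SimpleGraph V) : Prop :=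
  ∀ ⦃v0 v1 v2 w0 w1 w2 : V⦄, Γ.Adj v0 v1 → Γ.Adj v1 v2 → v0 ≠ v2 →
    Γ.Adj w0 w1 → Γ.Adj w1 w2 → w0 ≠ w2 →
    ∃! f : Equiv.Perm V, IsAut Γ f ∧ f v0 = w0 ∧ f v1 = w1 ∧ f v2 = w2

section Aux

variable {m n : ℕ} {k : ZMod m → ZMod n} {ℓ : ZMod n}

/-- Parity of sums of `val`s in `ZMod n` for even `n`. -/
lemma par_add (hn2 : n % 2 = 0) [NeZero n] (x y : ZMod n) :
    (x + y).val % 2 = (x.val + y.val) % 2 := by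
  rw [ZMod.val_add, Nat.mod_mod_of_dvd _ (Nat.dvd_of_mod_eq_zero hn2)]

lemma par_mul (hn2 : n % 2 = 0) [NeZero n] (x y : ZMod n) :
    (x * y).val % 2 = (x.val * y.val) % 2 := by
  rw [ZMod.val_mul, Nat.mod_mod_of_dvd _ (Nat.dvd_of_mod_eq_zero hn2)]

lemma par_neg (hn2 : n % 2 = 0) [NeZero n] (x : ZMod n) :
    (-x).val % 2 = x.val % 2 := by
  rw [ZMod.neg_val]
  split
  · simp [*]
  · have := x.val_lt
    omega

lemma par_sub (hn2 : n % 2 = 0) [NeZero n] (x y : ZMod n) :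
    (x - y).val % 2 = (x.val + y.val) % 2 := by
  rw [sub_eq_add_neg, par_add hn2]
  have := par_neg hn2 y
  omega

/-- Context facts from Assumption A. -/
structure Ctx (m n : ℕ) (k : ZMod m → ZMod n) (ℓ : ZMod n) : Prop where
  hm : 3 ≤ m
  hn : 6 ≤ n
  hn2 : n % 2 = 0
  hl : ℓ.val % 2 = m % 2
  hk0 : k 0 = 1
  hcop : ∀ i : ZMod m, Nat.Coprime (k i).val n

namespace Ctx

lemma nzn (C : Ctx m n k ℓ) : NeZero n := ⟨by have := C.hn; omega⟩
lemma nzm (C : Ctx m n k ℓ) : NeZero m := ⟨by have := C.hm; omega⟩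

lemma kunit (C : Ctx m n k ℓ) (i : ZMod m) : IsUnit (k i) := by
  haveI := C.nzn
  have h := (ZMod.isUnit_iff_coprime (k i).val n).2 (C.hcop i)
  rwa [ZMod.natCast_val, ZMod.cast_id] at h

lemma kodd (C : Ctx m n k ℓ) (i : ZMod m) : (k i).val % 2 = 1 := by
  have h := C.hcop i
  have hn2 := C.hn2
  rcases Nat.mod_two_eq_zero_or_one (k i).val with h0 | h1
  · exfalso
    have h2 : 2 ∣ Nat.gcd (k i).val n :=
      Nat.dvd_gcd (Nat.dvd_of_mod_eq_zero h0) (Nat.dvd_of_mod_eq_zero hn2)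
    rw [h.gcd_eq_one] at h2
    omega
  · exact h1

lemma kne (C : Ctx m n k ℓ) (i : ZMod m) : k i ≠ 0 := by
  haveI := C.nzn
  intro h
  have := C.kodd i
  rw [h, ZMod.val_zero] at this
  omega

lemma two_ne (C : Ctx m n k ℓ) : (2 : ZMod n) ≠ 0 := by
  haveI := C.nzn
  intro h
  have : ((2 : ℕ) : ZMod n) = 0 := by exact_mod_cast h
  have h2 := (ZMod.natCast_eq_zero_iff 2 n).1 this
  have h3 := Nat.le_of_dvd (by norm_num) h2
  have := C.hn
  omega

lemma twok_ne (C : Ctx m n k ℓ) (i : ZMod m) : (2 : ZMod n) * k i ≠ 0 := by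
  intro h
  apply C.two_ne
  have hu := C.kunit i
  have h2 : (2 : ZMod n) * k i * (k i)⁻¹ = 0 * (k i)⁻¹ := by rw [h]
  rwa [mul_assoc, ZMod.mul_inv_of_unit _ hu, mul_one, zero_mul] at h2

end Ctx

end Aux

section Aux2

variable {m n : ℕ} {k : ZMod m → ZMod n} {ℓ : ZMod n}

namespace Ctx

/-- Any two "cycle-consecutive" vertices are adjacent in the 2-factor. -/
lemma H_adj_step (C : Ctx m n k ℓ) (i : ZMod m) (j : ZMod n) :
    (XaFactor m n k (fun i => -(k i))).Adj (i, j) (i, j + k i) := by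
  haveI := C.nzn
  rw [XaFactor, SimpleGraph.fromRel_adj]
  constructor
  · intro h
    have h2 : j = j + k i := congrArg Prod.snd h
    have : k i = 0 := by linear_combination -h2
    exact C.kne i this
  · by_cases hp : j.val % 2 = i.val % 2
    · exact Or.inl ⟨hp, rfl, Or.inl rfl⟩
    · refine Or.inr ⟨?_, rfl, Or.inr ?_⟩
      · show (j + k i).val % 2 = i.val % 2
        rw [par_add C.hn2]
        have h1 := C.kodd i
        have h2 : j.val % 2 = 0 ∨ j.val % 2 = 1 := Nat.mod_two_eq_zero_or_one j.val
        have h3 : i.val % 2 = 0 ∨ i.val % 2 = 1 := Nat.mod_two_eq_zero_or_one i.val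
        omega
      · show j = j + k i + -k i
        ring

/-- Structure of 2-factor adjacency: same cycle, consecutive. -/
lemma H_adj_struct (C : Ctx m n k ℓ) {u v : ZMod m × ZMod n}
    (h : (XaFactor m n k (fun i => -(k i))).Adj u v) :
    u.1 = v.1 ∧ (v.2 = u.2 + k u.1 ∨ v.2 = u.2 - k u.1) := by
  rw [XaFactor, SimpleGraph.fromRel_adj] at h
  rcases h with ⟨hne, h | h⟩
  · obtain ⟨-, h1, h2⟩ := h
    refine ⟨h1, ?_⟩
    rcases h2 with h2 | h2
    · exact Or.inl h2
    · right; rw [h2]; ring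
  · obtain ⟨-, h1, h2⟩ := h
    refine ⟨h1.symm, ?_⟩
    rcases h2 with h2 | h2
    · right; rw [← h1, h2]; ring
    · left; rw [← h1, h2]; ring

end Ctx

end Aux2

section Aux3

variable {m n : ℕ} {k : ZMod m → ZMod n} {ℓ : ZMod n}

/-- The shift of the "link" edge leaving cycle `i` upward. -/
def dlt (m : ℕ) {n : ℕ} (ℓ : ZMod n) (i : ZMod m) : ZMod n :=
  if i = ((m - 1 : ℕ) : ZMod m) then ℓ else 0

/-- A vertex is "up" if it carries an upward link. -/
def IsUp {m n : ℕ} (u : ZMod m × ZMod n) : Prop := u.2.val % 2 = u.1.val % 2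

namespace Ctx

lemma msub1_val (C : Ctx m n k ℓ) : ((m - 1 : ℕ) : ZMod m).val = m - 1 := by
  haveI := C.nzm
  have := C.hm
  rw [ZMod.val_natCast, Nat.mod_eq_of_lt (by omega)]

lemma msub1_cast (C : Ctx m n k ℓ) : ((m - 1 : ℕ) : ZMod m) = -1 := by
  have hm := C.hm
  have : ((m - 1 : ℕ) : ZMod m) = ((m : ℕ) : ZMod m) - 1 := by
    rw [Nat.cast_sub (by omega), Nat.cast_one]
  rw [this, ZMod.natCast_self, zero_sub]

lemma natCast_val_self (C : Ctx m n k ℓ) (i : ZMod m) : ((i.val : ℕ) : ZMod m) = i := by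
  haveI := C.nzm
  exact ZMod.natCast_rightInverse i

lemma val_eq_msub1 (C : Ctx m n k ℓ) {i : ZMod m} (h : i.val = m - 1) :
    i = ((m - 1 : ℕ) : ZMod m) := by
  rw [← C.natCast_val_self i, h]

lemma val_add_one (C : Ctx m n k ℓ) {i : ZMod m} (h : i ≠ ((m - 1 : ℕ) : ZMod m)) :
    (i + 1).val = i.val + 1 := by
  haveI := C.nzm
  have hv : i.val < m := ZMod.val_lt i
  have hne : i.val ≠ m - 1 := fun h' => h (C.val_eq_msub1 h')
  have : i + 1 = ((i.val + 1 : ℕ) : ZMod m) := by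
    rw [Nat.cast_add, Nat.cast_one, C.natCast_val_self i]
  rw [this, ZMod.val_natCast, Nat.mod_eq_of_lt (by omega)]

lemma val_one_m (C : Ctx m n k ℓ) : (1 : ZMod m).val = 1 := by
  haveI := C.nzm
  have := C.hm
  have : (1 : ZMod m) = ((1 : ℕ) : ZMod m) := by norm_cast
  rw [this, ZMod.val_natCast, Nat.mod_eq_of_lt (by omega)]

lemma one_ne_zero_m (C : Ctx m n k ℓ) : (1 : ZMod m) ≠ 0 := by
  haveI := C.nzm
  intro h
  have := C.val_one_m
  rw [h, ZMod.val_zero] at this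
  omega

lemma not_H_of_fst_ne (C : Ctx m n k ℓ) {u v : ZMod m × ZMod n} (h : u.1 ≠ v.1) :
    ¬ (XaFactor m n k (fun i => -(k i))).Adj u v :=
  fun hH => h (C.H_adj_struct hH).1

lemma link_cases (C : Ctx m n k ℓ) {u v : ZMod m × ZMod n}
    (h1 : (XaGraph m n k (fun i => -(k i)) ℓ).Adj u v)
    (h2 : ¬ (XaFactor m n k (fun i => -(k i))).Adj u v) :
    XaLinkRel m n ℓ u v ∨ XaLinkRel m n ℓ v u := by
  rw [XaGraph, SimpleGraph.fromRel_adj] at h1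
  rw [XaFactor, SimpleGraph.fromRel_adj] at h2
  push_neg at h2
  obtain ⟨hne, h⟩ := h1
  have h2' := h2 hne
  tauto

lemma link_adj (C : Ctx m n k ℓ) {u v : ZMod m × ZMod n} (hne : u ≠ v)
    (h : XaLinkRel m n ℓ u v) : (XaGraph m n k (fun i => -(k i)) ℓ).Adj u v := by
  rw [XaGraph, SimpleGraph.fromRel_adj]
  exact ⟨hne, Or.inl (Or.inr h)⟩

/-- Existence and shape of the rung at an up vertex. -/
lemma rung_up (C : Ctx m n k ℓ) {u : ZMod m × ZMod n} (hu : IsUp u) :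
    (XaGraph m n k (fun i => -(k i)) ℓ).Adj u (u.1 + 1, u.2 + dlt m ℓ u.1) ∧
      ¬ (XaFactor m n k (fun i => -(k i))).Adj u (u.1 + 1, u.2 + dlt m ℓ u.1) ∧
      ¬ IsUp (u.1 + 1, u.2 + dlt m ℓ u.1) := by
  haveI := C.nzm
  haveI := C.nzn
  have hm := C.hm
  have hfst : u.1 ≠ u.1 + 1 := by
    intro h
    have : (1 : ZMod m) = 0 := by linear_combination -h
    exact C.one_ne_zero_m this
  have hne : u ≠ (u.1 + 1, u.2 + dlt m ℓ u.1) := fun h => hfst (congrArg Prod.fst h)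
  refine ⟨C.link_adj hne ?_, C.not_H_of_fst_ne hfst, ?_⟩
  · by_cases hi : u.1 = ((m - 1 : ℕ) : ZMod m)
    · refine Or.inr ⟨?_, hi, ?_, ?_⟩
      · rw [hu, hi, C.msub1_val]
      · show u.1 + 1 = 0
        rw [hi, C.msub1_cast]; ring
      · show u.2 + dlt m ℓ u.1 = u.2 + ℓ
        rw [dlt, if_pos hi]
    · refine Or.inl ⟨hu, ?_, rfl, ?_⟩
      · have hv : u.1.val < m := ZMod.val_lt u.1
        have : u.1.val ≠ m - 1 := fun h' => hi (C.val_eq_msub1 h')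
        omega
      · show u.2 + dlt m ℓ u.1 = u.2
        rw [dlt, if_neg hi, add_zero]
  · by_cases hi : u.1 = ((m - 1 : ℕ) : ZMod m)
    · intro hUp
      rw [IsUp] at hUp hu
      simp only at hUp
      have e1 : u.1 + 1 = 0 := by rw [hi, C.msub1_cast]; ring
      have e2 : dlt m ℓ u.1 = ℓ := by rw [dlt, if_pos hi]
      rw [e1, e2] at hUp
      rw [par_add C.hn2] at hUp
      have h3 := C.hl
      have h4 : u.1.val = m - 1 := by rw [hi, C.msub1_val]
      rw [ZMod.val_zero] at hUp
      omega
    · intro hUp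
      rw [IsUp] at hUp hu
      simp only at hUp
      have e2 : dlt m ℓ u.1 = 0 := by rw [dlt, if_neg hi]
      rw [e2, add_zero, C.val_add_one hi] at hUp
      omega

/-- Existence and shape of the rung at a down vertex. -/
lemma rung_down (C : Ctx m n k ℓ) {u : ZMod m × ZMod n} (hu : ¬ IsUp u) :
    (XaGraph m n k (fun i => -(k i)) ℓ).Adj u (u.1 - 1, u.2 - dlt m ℓ (u.1 - 1)) ∧
      ¬ (XaFactor m n k (fun i => -(k i))).Adj u (u.1 - 1, u.2 - dlt m ℓ (u.1 - 1)) ∧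
      IsUp (u.1 - 1, u.2 - dlt m ℓ (u.1 - 1)) := by
  haveI := C.nzm
  haveI := C.nzn
  have hm := C.hm
  set w : ZMod m × ZMod n := (u.1 - 1, u.2 - dlt m ℓ (u.1 - 1)) with hw
  have hwUp : IsUp w := by
    rw [IsUp]
    by_cases h0 : u.1 = 0
    · have e1 : u.1 - 1 = ((m - 1 : ℕ) : ZMod m) := by rw [C.msub1_cast, h0]; ring
      have e2 : dlt m ℓ (u.1 - 1) = ℓ := by rw [dlt, if_pos e1]
      show (u.2 - dlt m ℓ (u.1 - 1)).val % 2 = (u.1 - 1).val % 2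
      rw [e2, e1, C.msub1_val, par_sub C.hn2]
      rw [IsUp] at hu
      have h2 : u.1.val = 0 := by rw [h0, ZMod.val_zero]
      have h3 := C.hl
      have h4 : u.2.val % 2 = 0 ∨ u.2.val % 2 = 1 := Nat.mod_two_eq_zero_or_one _
      have h5 : ℓ.val % 2 = 0 ∨ ℓ.val % 2 = 1 := Nat.mod_two_eq_zero_or_one _
      omega
    · have hval : u.1.val ≠ 0 := by
        intro h; exact h0 (by rw [← C.natCast_val_self u.1, h, Nat.cast_zero])
      have e1 : u.1 - 1 ≠ ((m - 1 : ℕ) : ZMod m) := by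
        intro h
        apply h0
        have : u.1 = ((m - 1 : ℕ) : ZMod m) + 1 := by linear_combination h
        rw [this, C.msub1_cast]; ring
      have e2 : dlt m ℓ (u.1 - 1) = 0 := by rw [dlt, if_neg e1]
      have e3 : (u.1 - 1).val = u.1.val - 1 := by
        have : u.1 - 1 = ((u.1.val - 1 : ℕ) : ZMod m) := by
          rw [Nat.cast_sub (by omega), Nat.cast_one, C.natCast_val_self u.1]
        rw [this, ZMod.val_natCast, Nat.mod_eq_of_lt (by have := ZMod.val_lt u.1; omega)]
      show (u.2 - dlt m ℓ (u.1 - 1)).val % 2 = (u.1 - 1).val % 2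
      rw [e2, sub_zero, e3]
      rw [IsUp] at hu
      have h4 : u.2.val % 2 = 0 ∨ u.2.val % 2 = 1 := Nat.mod_two_eq_zero_or_one _
      have h5 : u.1.val % 2 = 0 ∨ u.1.val % 2 = 1 := Nat.mod_two_eq_zero_or_one _
      omega
  have hback : (w.1 + 1, w.2 + dlt m ℓ w.1) = u := by
    have e1 : w.1 + 1 = u.1 := by rw [hw]; ring
    have e2 : dlt m ℓ w.1 = dlt m ℓ (u.1 - 1) := by rw [hw]
    rw [Prod.ext_iff]
    refine ⟨e1, ?_⟩
    show w.2 + dlt m ℓ w.1 = u.2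
    rw [e2, hw]; ring
  obtain ⟨hadj, hnH, -⟩ := C.rung_up hwUp
  rw [hback] at hadj hnH
  refine ⟨hadj.symm, fun h => hnH h.symm, hwUp⟩

end Ctx

end Aux3

section Aux4

variable {m n : ℕ} {k : ZMod m → ZMod n} {ℓ : ZMod n}

namespace Ctx

/-- Uniqueness of the rung at an up vertex. -/
lemma rung_up_unique (C : Ctx m n k ℓ) {u v : ZMod m × ZMod n} (hu : IsUp u)
    (h1 : (XaGraph m n k (fun i => -(k i)) ℓ).Adj u v)
    (h2 : ¬ (XaFactor m n k (fun i => -(k i))).Adj u v) :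
    v = (u.1 + 1, u.2 + dlt m ℓ u.1) := by
  haveI := C.nzm
  haveI := C.nzn
  have hm := C.hm
  rcases C.link_cases h1 h2 with h | h
  · rcases h with ⟨hp, hle, hv1, hv2⟩ | ⟨hp, hi, hv1, hv2⟩
    · have hi : u.1 ≠ ((m - 1 : ℕ) : ZMod m) := by
        intro h
        rw [h, C.msub1_val] at hle
        omega
      have : dlt m ℓ u.1 = 0 := by rw [dlt, if_neg hi]
      rw [Prod.ext_iff, this, add_zero]
      exact ⟨hv1, hv2⟩
    · have e1 : u.1 + 1 = 0 := by rw [hi, C.msub1_cast]; ring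
      have e2 : dlt m ℓ u.1 = ℓ := by rw [dlt, if_pos hi]
      rw [Prod.ext_iff, e1, e2]
      exact ⟨hv1, hv2⟩
  · exfalso
    rcases h with ⟨hp, hle, hu1, hu2⟩ | ⟨hp, hi, hu1, hu2⟩
    · have hvi : v.1 ≠ ((m - 1 : ℕ) : ZMod m) := by
        intro h
        rw [h, C.msub1_val] at hle
        omega
      rw [IsUp] at hu
      rw [hu1, C.val_add_one hvi] at hu
      rw [hu2] at hu
      omega
    · rw [IsUp, hu1, hu2, ZMod.val_zero, par_add C.hn2] at hu
      have h3 := C.hl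
      omega

/-- Uniqueness of the rung at a down vertex. -/
lemma rung_down_unique (C : Ctx m n k ℓ) {u v : ZMod m × ZMod n} (hu : ¬ IsUp u)
    (h1 : (XaGraph m n k (fun i => -(k i)) ℓ).Adj u v)
    (h2 : ¬ (XaFactor m n k (fun i => -(k i))).Adj u v) :
    v = (u.1 - 1, u.2 - dlt m ℓ (u.1 - 1)) := by
  haveI := C.nzm
  haveI := C.nzn
  have hm := C.hm
  rcases C.link_cases h1 h2 with h | h
  · exfalso
    rcases h with ⟨hp, hle, hv1, hv2⟩ | ⟨hp, hi, hv1, hv2⟩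
    · exact hu hp
    · apply hu
      rw [IsUp, hp, hi, C.msub1_val]
  · rcases h with ⟨hp, hle, hu1, hu2⟩ | ⟨hp, hi, hu1, hu2⟩
    · have hvi : v.1 ≠ ((m - 1 : ℕ) : ZMod m) := by
        intro h
        rw [h, C.msub1_val] at hle
        omega
      have e1 : u.1 - 1 = v.1 := by rw [hu1]; ring
      have e2 : dlt m ℓ v.1 = 0 := by rw [dlt, if_neg hvi]
      rw [Prod.ext_iff, e1, e2, sub_zero, hu2]
      exact ⟨rfl, rfl⟩
    · have e1 : u.1 - 1 = v.1 := by rw [hu1, hi, C.msub1_cast]; ring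
      have e2 : dlt m ℓ v.1 = ℓ := by rw [dlt, if_pos hi]
      rw [Prod.ext_iff, e1, e2, hu2]
      exact ⟨rfl, by ring⟩

end Ctx

end Aux4

section Aux5

variable {m n : ℕ} {k : ZMod m → ZMod n} {ℓ : ZMod n}

namespace Ctx

/-- A factor-preserving permutation acts affinely on each cycle of the 2-factor. -/
lemma affine (C : Ctx m n k ℓ) (g : Equiv.Perm (ZMod m × ZMod n))
    (hg : ∀ u v, (XaFactor m n k (fun i => -(k i))).Adj u v →
      (XaFactor m n k (fun i => -(k i))).Adj (g u) (g v))
    (i : ZMod m) :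
    ∃ s lam c, (lam * k i = k s ∨ lam * k i = -(k s)) ∧
      ∀ j : ZMod n, g (i, j) = (s, c + lam * j) := by
  haveI := C.nzn
  set J : ℕ → ZMod n := fun t => (t : ZMod n) * k i with hJ
  have hJ0 : J 0 = 0 := by simp [hJ]
  have hstep : ∀ t : ℕ, (XaFactor m n k (fun i => -(k i))).Adj (i, J t) (i, J (t + 1)) := by
    intro t
    have h := C.H_adj_step i (J t)
    have : J (t + 1) = J t + k i := by
      rw [hJ]; push_cast; ring
    rwa [← this] at h
  set s : ZMod m := (g (i, (0 : ZMod n))).1 with hs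
  set c : ZMod n := (g (i, (0 : ZMod n))).2 with hc
  have hfst : ∀ t : ℕ, (g (i, J t)).1 = s := by
    intro t
    induction t with
    | zero => rw [hJ0]
    | succ t ih => rw [← (C.H_adj_struct (hg _ _ (hstep t))).1, ih]
  set d : ZMod n := (g (i, J 1)).2 - (g (i, J 0)).2 with hd
  have hdks : d = k s ∨ d = -(k s) := by
    have h := (C.H_adj_struct (hg _ _ (hstep 0))).2
    rw [hfst 0] at h
    rcases h with h | h
    · left; rw [hd, h]; ring
    · right; rw [hd, h]; ring
  have hdiff : ∀ t : ℕ, (g (i, J (t + 1))).2 = (g (i, J t)).2 + d := by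
    intro t
    induction t with
    | zero => show (g (i, J 1)).2 = (g (i, J 0)).2 + d; rw [hd]; ring
    | succ t ih =>
      have h := (C.H_adj_struct (hg _ _ (hstep (t + 1)))).2
      rw [hfst (t + 1)] at h
      have hbad : (g (i, J (t + 1 + 1))).2 = (g (i, J (t + 1))).2 - d → False := by
        intro hb
        have heq : g (i, J (t + 1 + 1)) = g (i, J t) := by
          rw [Prod.ext_iff]
          constructor
          · rw [hfst, hfst]
          · rw [hb, ih]; ring
        have heq2 : ((i, J (t + 1 + 1)) : ZMod m × ZMod n) = (i, J t) := g.injective heq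
        have heq3 : J (t + 1 + 1) = J t := congrArg Prod.snd heq2
        apply C.twok_ne i
        have h5 : J (t + 1 + 1) - J t = 2 * k i := by rw [hJ]; push_cast; ring
        rw [← h5, heq3]; ring
      rcases hdks with hd1 | hd1 <;> rcases h with h | h
      · rw [hd1]; exact h
      · exact absurd (by rw [hd1]; exact h) hbad
      · exact absurd (by rw [hd1, h]; ring) hbad
      · rw [hd1, h]; ring
  have hval : ∀ t : ℕ, (g (i, J t)).2 = c + (t : ZMod n) * d := by
    intro t
    induction t with
    | zero => rw [hJ0, ← hc]; push_cast; ring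
    | succ t ih => rw [hdiff t, ih]; push_cast; ring
  refine ⟨s, d * (k i)⁻¹, c, ?_, ?_⟩
  · rw [mul_assoc, ZMod.inv_mul_of_unit _ (C.kunit i), mul_one]
    exact hdks
  · intro j
    set t : ℕ := (j * (k i)⁻¹).val with ht
    have htc : (t : ZMod n) = j * (k i)⁻¹ := ZMod.natCast_rightInverse _
    have hJt : J t = j := by
      rw [hJ]
      show ((t : ℕ) : ZMod n) * k i = j
      rw [htc, mul_assoc, ZMod.inv_mul_of_unit _ (C.kunit i), mul_one]
    have h2 := hval t
    rw [hJt, htc] at h2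
    have h1 : (g (i, j)).1 = s := by rw [← hJt]; exact hfst t
    exact Prod.ext_iff.2 ⟨h1, by rw [h2]; ring⟩

end Ctx

end Aux5

section Aux6

variable {m n : ℕ} {k : ZMod m → ZMod n} {ℓ : ZMod n}

namespace Ctx

lemma two_val (C : Ctx m n k ℓ) : (2 : ZMod n).val = 2 := by
  haveI := C.nzn
  have h : (2 : ZMod n) = ((2 : ℕ) : ZMod n) := by norm_cast
  rw [h, ZMod.val_natCast, Nat.mod_eq_of_lt (by have := C.hn; omega)]

lemma odd_of_mul_odd (C : Ctx m n k ℓ) {x y : ZMod n} (h : (x * y).val % 2 = 1) :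
    x.val % 2 = 1 := by
  haveI := C.nzn
  rw [par_mul C.hn2, Nat.mul_mod] at h
  rcases Nat.mod_two_eq_zero_or_one x.val with h0 | h0
  · rw [h0] at h; simp at h
  · exact h0

/-- Main structural lemma: if a factor-preserving automorphism maps `v_{0,0}` to a
"down" vertex `v_{p,q}`, then it reflects the cycle structure, forcing
`2 k_{p-i} = ± 2 k_p k_i` for all `i`. -/
lemma down_lemma (C : Ctx m n k ℓ) (g : Equiv.Perm (ZMod m × ZMod n))
    (hgA : IsAut (XaGraph m n k (fun i => -(k i)) ℓ) g)
    (hgH : ∀ u v, (XaFactor m n k (fun i => -(k i))).Adj u v →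
      (XaFactor m n k (fun i => -(k i))).Adj (g u) (g v))
    (hgH' : ∀ u v, (XaFactor m n k (fun i => -(k i))).Adj u v →
      (XaFactor m n k (fun i => -(k i))).Adj (g⁻¹ u) (g⁻¹ v))
    (p : ZMod m) (q : ZMod n) (hg0 : g (0, 0) = (p, q)) (hpq : q.val % 2 ≠ p.val % 2) :
    ∀ i : ZMod m, 2 * k (p - i) = 2 * k p * k i ∨ 2 * k (p - i) = -(2 * k p * k i) := by
  haveI := C.nzn
  haveI := C.nzm
  have hdvd2 : (2 : ℕ) ∣ n := Nat.dvd_of_mod_eq_zero C.hn2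
  -- affine data on each cycle
  have haff := fun i => C.affine g hgH i
  choose σ lam c hlam hval using haff
  -- rungs map to rungs
  have hrung : ∀ u v, (XaGraph m n k (fun i => -(k i)) ℓ).Adj u v →
      ¬ (XaFactor m n k (fun i => -(k i))).Adj u v →
      (XaGraph m n k (fun i => -(k i)) ℓ).Adj (g u) (g v) ∧
        ¬ (XaFactor m n k (fun i => -(k i))).Adj (g u) (g v) := by
    intro u v h1 h2
    refine ⟨(hgA u v).2 h1, fun hH => ?_⟩
    have h3 := hgH' _ _ hH
    rw [Equiv.Perm.inv_def, Equiv.symm_apply_apply, Equiv.symm_apply_apply] at h3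
    exact h2 h3
  -- slopes are odd
  have hlamodd : ∀ i, (lam i).val % 2 = 1 := by
    intro i
    rcases hlam i with h | h
    · exact C.odd_of_mul_odd (x := lam i) (y := k i) (by rw [h]; exact C.kodd (σ i))
    · exact C.odd_of_mul_odd (x := lam i) (y := k i)
        (by rw [h, par_neg C.hn2]; exact C.kodd (σ i))
  have haux : ∀ (ii : ZMod m) (x y : ZMod n), (x + lam ii * y).val % 2 = (x.val + y.val) % 2 := by
    intro ii x y
    rw [par_add C.hn2]
    have h8 := par_mul C.hn2 (lam ii) y
    have h10 : ((lam ii).val * y.val) % 2 = y.val % 2 := by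
      rw [Nat.mul_mod, hlamodd ii, one_mul, Nat.mod_mod_of_dvd _ dvd_rfl]
    omega
  -- base data
  have hbase := hval 0 0
  rw [hg0, mul_zero, add_zero, Prod.ext_iff] at hbase
  have hσ0 : σ 0 = p := hbase.1.symm
  have hc0 : c 0 = q := hbase.2.symm
  -- the "down" invariant
  set Dn : ZMod m → Prop := fun i =>
    ∀ j : ZMod n, j.val % 2 = i.val % 2 → (c i + lam i * j).val % 2 ≠ (σ i).val % 2
    with hDnDef
  -- the induction step
  have step : ∀ i : ZMod m, Dn i →
      σ (i + 1) = σ i - 1 ∧ 2 * lam (i + 1) = 2 * lam i ∧ Dn (i + 1) := by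
    intro i hDn
    set j : ZMod n := ((i.val : ℕ) : ZMod n) with hj
    have hjup : j.val % 2 = i.val % 2 := by
      rw [hj, ZMod.val_natCast]
      exact Nat.mod_mod_of_dvd _ hdvd2
    have hUp : IsUp ((i, j) : ZMod m × ZMod n) := hjup
    have h2kpar : (2 * k i).val % 2 = 0 := by
      rw [par_mul C.hn2, Nat.mul_mod, C.two_val]
      simp
    have hj2up : (j + 2 * k i).val % 2 = i.val % 2 := by
      rw [par_add C.hn2]
      omega
    have hUp2 : IsUp ((i, j + 2 * k i) : ZMod m × ZMod n) := hj2up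
    -- rung at (i, j)
    obtain ⟨hadj, hnH, hfd⟩ := C.rung_up hUp
    dsimp only at hadj hnH hfd
    have hgu : g (i, j) = (σ i, c i + lam i * j) := hval i j
    have hgu_dn : ¬ IsUp (g (i, j)) := by
      rw [hgu]
      exact fun h => hDn j hjup h
    obtain ⟨h1, h2⟩ := hrung _ _ hadj hnH
    have hfoot_eq := C.rung_down_unique hgu_dn h1 h2
    obtain ⟨-, -, hfootUp⟩ := C.rung_down hgu_dn
    rw [← hfoot_eq] at hfootUp
    rw [hval (i + 1), hval i] at hfoot_eq
    dsimp only at hfoot_eq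
    rw [Prod.ext_iff] at hfoot_eq
    obtain ⟨hL1, hL2⟩ := hfoot_eq
    -- rung at (i, j + 2 k i)
    obtain ⟨hadj', hnH', -⟩ := C.rung_up hUp2
    dsimp only at hadj' hnH'
    have hgu2 : g (i, j + 2 * k i) = (σ i, c i + lam i * (j + 2 * k i)) := hval i _
    have hgu2_dn : ¬ IsUp (g (i, j + 2 * k i)) := by
      rw [hgu2]
      exact fun h => hDn _ hj2up h
    obtain ⟨h1', h2'⟩ := hrung _ _ hadj' hnH'
    have hfoot_eq2 := C.rung_down_unique hgu2_dn h1' h2'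
    rw [hval (i + 1), hval i] at hfoot_eq2
    dsimp only at hfoot_eq2
    rw [Prod.ext_iff] at hfoot_eq2
    obtain ⟨hL1', hL2'⟩ := hfoot_eq2
    -- σ relation
    refine ⟨hL1, ?_, ?_⟩
    · -- slope relation
      have hsub : lam (i + 1) * (2 * k i) = lam i * (2 * k i) := by
        have hs : σ i - 1 = σ (i + 1) := hL1.symm
        rw [← hs] at hL2 hL2'
        linear_combination hL2' - hL2
      have h6 : 2 * lam (i + 1) * (k i * (k i)⁻¹) = 2 * lam i * (k i * (k i)⁻¹) := by
        linear_combination (k i)⁻¹ * hsub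
      rwa [ZMod.mul_inv_of_unit _ (C.kunit i), mul_one, mul_one] at h6
    · -- down invariant propagates
      have hfootUp' : (c (i + 1) + lam (i + 1) * (j + dlt m ℓ i)).val % 2
          = (σ (i + 1)).val % 2 := by
        have h7 : IsUp (g (i + 1, j + dlt m ℓ i)) := hfootUp
        rw [hval (i + 1)] at h7
        exact h7
      have hfd' : (j + dlt m ℓ i).val % 2 ≠ (i + 1).val % 2 := hfd
      intro j' hj'
      intro hbad
      apply hfd'
      -- parity comparison
      have e1 := haux (i + 1) (c (i + 1)) j'
      have e2 := haux (i + 1) (c (i + 1)) (j + dlt m ℓ i)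
      rw [e1] at hbad
      rw [e2] at hfootUp'
      omega
  -- main induction
  have main : ∀ t : ℕ, σ ((t : ℕ) : ZMod m) = p - (t : ZMod m) ∧
      2 * lam ((t : ℕ) : ZMod m) = 2 * lam 0 ∧ Dn ((t : ℕ) : ZMod m) := by
    intro t
    induction t with
    | zero =>
      refine ⟨by rw [Nat.cast_zero, hσ0]; ring, by rw [Nat.cast_zero], ?_⟩
      rw [Nat.cast_zero]
      intro j hj
      rw [hσ0, hc0]
      rw [ZMod.val_zero] at hj
      have e1 := haux 0 q j
      omega
    | succ t ih =>
      obtain ⟨ih1, ih2, ih3⟩ := ih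
      obtain ⟨s1, s2, s3⟩ := step _ ih3
      have hcast : ((t + 1 : ℕ) : ZMod m) = ((t : ℕ) : ZMod m) + 1 := by push_cast; ring
      refine ⟨?_, ?_, ?_⟩
      · rw [hcast, s1, ih1]; push_cast; ring
      · rw [hcast, s2, ih2]
      · rw [hcast]; exact s3
  -- conclusion
  intro i
  obtain ⟨m1, m2, -⟩ := main i.val
  rw [C.natCast_val_self i] at m1 m2
  have hA := hlam i
  rw [m1] at hA
  have hB := hlam 0
  rw [C.hk0, mul_one, hσ0] at hB
  rcases hA with hA | hA <;> rcases hB with hB | hB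
  · left; linear_combination (-2 : ZMod n) * hA + k i * m2 + 2 * k i * hB
  · right; linear_combination (-2 : ZMod n) * hA + k i * m2 + 2 * k i * hB
  · right; linear_combination (2 : ZMod n) * hA - k i * m2 - 2 * k i * hB
  · left; linear_combination (2 : ZMod n) * hA - k i * m2 - 2 * k i * hB

end Ctx

end Aux6

section Aux7

variable {m n : ℕ} {k : ZMod m → ZMod n} {ℓ : ZMod n}

/-- `2x = ±2y`. -/
def Pm {n : ℕ} (x y : ZMod n) : Prop := 2 * x = 2 * y ∨ 2 * x = -(2 * y)

lemma pm_refl (x : ZMod n) : Pm x x := Or.inl rfl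

lemma pm_symm {x y : ZMod n} (h : Pm x y) : Pm y x := by
  rcases h with h | h
  · left; linear_combination -h
  · right; linear_combination h

lemma pm_trans {x y z : ZMod n} (h1 : Pm x y) (h2 : Pm y z) : Pm x z := by
  rcases h1 with h1 | h1 <;> rcases h2 with h2 | h2
  · left; linear_combination h1 + h2
  · right; linear_combination h1 + h2
  · right; linear_combination h1 - h2
  · left; linear_combination h1 - h2

lemma pm_mul (u : ZMod n) {x y : ZMod n} (h : Pm x y) : Pm (u * x) (u * y) := by
  rcases h with h | h
  · left; linear_combination u * h
  · right; linear_combination u * h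

namespace Ctx

lemma val_one_n (C : Ctx m n k ℓ) : (1 : ZMod n).val = 1 := by
  haveI := C.nzn
  have h : (1 : ZMod n) = ((1 : ℕ) : ZMod n) := by norm_cast
  rw [h, ZMod.val_natCast, Nat.mod_eq_of_lt (by have := C.hn; omega)]

end Ctx

end Aux7


/-- dichotomy for the signature values `2k_i`. -/
theorem statement7 (m n : ℕ) (k : ZMod m → ZMod n) (ℓ : ZMod n)
    (hA : AssumptionA m n k ℓ) :
    Xor'
      (∀ i : ZMod m, 2 * k i = 2 ∨ 2 * k i = -2)
      (m % 2 = 0 ∧ (2 * k 1 ≠ 2 ∧ 2 * k 1 ≠ -2) ∧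
        (∀ i : ZMod m, i.val % 2 = 0 → 2 * k i = 2 ∨ 2 * k i = -2) ∧
        (∀ i : ZMod m, i.val % 2 = 1 → 2 * k i = 2 * k 1 ∨ 2 * k i = -(2 * k 1))) := by
  obtain ⟨hm, hn, hn2, hl, hk0, hcop, G, hGaut, hGpres, htrans⟩ := hA
  have C : Ctx m n k ℓ := ⟨hm, hn, hn2, hl, hk0, hcop⟩
  haveI := C.nzn
  haveI := C.nzm
  -- an automorphism sending v_{0,0} to v_{0,1}
  obtain ⟨g1, hg1G, hg1⟩ := htrans ((0 : ZMod m), (0 : ZMod n)) (0, 1)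
  have hR := C.down_lemma g1 (hGaut _ hg1G) (hGpres _ hg1G)
    (hGpres _ (inv_mem hg1G)) 0 1 hg1
    (by rw [C.val_one_n, ZMod.val_zero]; omega)
  -- an automorphism sending v_{0,0} to v_{1,0}
  obtain ⟨g2, hg2G, hg2⟩ := htrans ((0 : ZMod m), (0 : ZMod n)) (1, 0)
  have hS := C.down_lemma g2 (hGaut _ hg2G) (hGpres _ hg2G)
    (hGpres _ (inv_mem hg2G)) 1 0 hg2
    (by rw [C.val_one_m, ZMod.val_zero]; omega)
  -- clean up
  have R : ∀ i : ZMod m, Pm (k (-i)) (k i) := by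
    intro i
    have h := hR i
    rw [zero_sub, hk0] at h
    rcases h with h | h
    · left; linear_combination h
    · right; linear_combination h
  have S : ∀ i : ZMod m, Pm (k (1 - i)) (k 1 * k i) := by
    intro i
    have h := hS i
    rcases h with h | h
    · left; linear_combination h
    · right; linear_combination h
  -- k₁² ~ 1
  have E : Pm (k 1 * k 1) 1 := by
    have h := S 1
    rw [sub_self, hk0] at h
    exact pm_symm h
  -- k_{i+1} ~ k₁ k_i
  have T : ∀ i : ZMod m, Pm (k (i + 1)) (k 1 * k i) := by
    intro i
    have h := S (-i)
    rw [sub_neg_eq_add, add_comm 1 i] at h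
    exact pm_trans h (pm_mul (k 1) (R i))
  -- k_t ~ k₁^t
  have U : ∀ t : ℕ, Pm (k ((t : ℕ) : ZMod m)) (k 1 ^ t) := by
    intro t
    induction t with
    | zero => rw [Nat.cast_zero, hk0, pow_zero]; exact pm_refl 1
    | succ t ih =>
      have hcast : ((t + 1 : ℕ) : ZMod m) = ((t : ℕ) : ZMod m) + 1 := by push_cast; ring
      rw [hcast]
      refine pm_trans (T _) (pm_trans (pm_mul (k 1) ih) ?_)
      rw [show k 1 * k 1 ^ t = k 1 ^ (t + 1) by ring]
      exact pm_refl _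
  -- power reduction
  have W : ∀ t : ℕ, Pm (k 1 ^ t) (k 1 ^ (t % 2)) := by
    intro t
    induction t using Nat.strong_induction_on with
    | _ t ih =>
      match t with
      | 0 => exact pm_refl _
      | 1 => exact pm_refl _
      | (t + 2) =>
        have h1 : Pm (k 1 ^ (t + 2)) (k 1 ^ t) := by
          have h := pm_mul (k 1 ^ t) E
          rw [mul_one, show k 1 ^ t * (k 1 * k 1) = k 1 ^ (t + 2) by ring] at h
          exact h
        have h2 : (t + 2) % 2 = t % 2 := by omega
        rw [h2]
        exact pm_trans h1 (ih t (by omega))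
  have Kpar : ∀ i : ZMod m, Pm (k i) (k 1 ^ (i.val % 2)) := by
    intro i
    have h := U i.val
    rw [C.natCast_val_self i] at h
    exact pm_trans h (W i.val)
  have hofpm : ∀ x : ZMod n, Pm x 1 → (2 * x = 2 ∨ 2 * x = -2) := by
    intro x h
    rcases h with h | h
    · left; linear_combination h
    · right; linear_combination h
  have htopm : ∀ x : ZMod n, (2 * x = 2 ∨ 2 * x = -2) → Pm x 1 := by
    intro x h
    rcases h with h | h
    · left; linear_combination h
    · right; linear_combination h
  by_cases hk1 : 2 * k 1 = 2 ∨ 2 * k 1 = -2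
  · -- case (a)
    left
    constructor
    · intro i
      apply hofpm
      refine pm_trans (Kpar i) ?_
      rcases Nat.mod_two_eq_zero_or_one i.val with h | h
      · rw [h, pow_zero]; exact pm_refl 1
      · rw [h, pow_one]; exact htopm _ hk1
    · rintro ⟨-, ⟨h1, h2⟩, -, -⟩
      rcases hk1 with h | h
      · exact h1 h
      · exact h2 h
  · -- case (b)
    right
    push_neg at hk1
    have hmeven : m % 2 = 0 := by
      by_contra hodd
      have h1 : m % 2 = 1 := by omega
      have h2 := U m
      rw [ZMod.natCast_self, hk0] at h2
      have h3 := pm_trans (pm_symm (W m)) (pm_symm h2)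
      rw [h1, pow_one] at h3
      rcases h3 with h | h
      · exact hk1.1 (by linear_combination h)
      · exact hk1.2 (by linear_combination h)
    refine ⟨⟨hmeven, ⟨hk1.1, hk1.2⟩, ?_, ?_⟩, ?_⟩
    · intro i hi
      apply hofpm
      have h := Kpar i
      rwa [hi, pow_zero] at h
    · intro i hi
      have h := Kpar i
      rw [hi, pow_one] at h
      exact h
    · intro hleft
      rcases hleft 1 with h | h
      · exact hk1.1 h
      · exact hk1.2 h

end CubicFIG
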